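/- arXiv:2011.09253 — 9 statements merged into one kernel-verified Lean document; each statement's English description precedes it below -/
import Mathlib

section
/- Let R be a ring and (𝒯, ℱ) a torsion pair in R-Mod (Hom(T,F)=0 for T ∈ 𝒯, F ∈ ℱ, both classes maximal with this property, and every module M fits in an exact sequence 0 → tM → M → M/tM → 0 with tM ∈ 𝒯 and M/tM ∈ ℱ). Let B ≠ 0 be a module satisfying: (1) B ∈ ℱ; (2) every nonzero morphism from B to a module of ℱ is injective. Then the following are equivalent: (3) for every short exact sequence 0 → B → F → M → 0 with F ∈ ℱ, also M ∈ ℱ; (3') for every non-split short exact sequence 0 → B → M → T → 0 with T ∈ 𝒯, also M ∈ 𝒯. -/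
universe u v
variable {R : Type u} [Ring R]

/-- A torsion pair in `R`-Mod: `Hom(𝒯, ℱ) = 0` and both classes are maximal with
this property. -/
def IsTorsionPair (R : Type u) [Ring R] (𝒯 ℱ : Set (ModuleCat.{v} R)) : Prop :=
  (∀ T ∈ 𝒯, ∀ F ∈ ℱ, ∀ f : ↑T →ₗ[R] ↑F, f = 0) ∧
  (∀ M : ModuleCat.{v} R, (∀ F ∈ ℱ, ∀ f : ↑M →ₗ[R] ↑F, f = 0) → M ∈ 𝒯) ∧
  (∀ M : ModuleCat.{v} R, (∀ T ∈ 𝒯, ∀ f : ↑T →ₗ[R] ↑M, f = 0) → M ∈ ℱ)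

/-- Every module has a torsion submodule, lying in `𝒯`, with quotient in `ℱ`. -/
def HasTorsionRadical (R : Type u) [Ring R] (𝒯 ℱ : Set (ModuleCat.{v} R)) : Prop :=
  ∀ M : ModuleCat.{v} R, ∃ tM : Submodule R ↑M,
    ModuleCat.of R tM ∈ 𝒯 ∧ ModuleCat.of R (↑M ⧸ tM) ∈ ℱ

/-!
(3) ⇒ (3'): let `0 → B → M → T → 0` be non-split with `T` torsion and compose `B → M → M/tM`.
If this map is zero, `M/tM` is a quotient of `T`, hence torsion and torsionfree, so `M = tM`.
Otherwise it is injective, and (3) makes `M/(tM + B)` torsionfree; being also a quotient of `T`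
it vanishes, so `M = tM ⊕ B` and `tM ≅ T` splits the sequence.

(3') ⇒ (3): given `0 → B → F → M → 0` with `F` torsionfree, pull it back along `tM ⊆ M` to
`0 → B → N → tM → 0` with `N ⊆ F`. If it splits, `tM` embeds into `F`, so `tM = 0`. Otherwise
(3') makes `N` torsion as well as torsionfree, so `N = 0`, which is impossible as `B ≠ 0`.
-/

open LinearMap Submodule

namespace LinearMap

variable {M N : Type*} [AddCommGroup M] [Module R M] [AddCommGroup N] [Module R N]

theorem exists_rightInverse_of_isCompl_ker {p : M →ₗ[R] N} (hp : Function.Surjective p)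
    {C : Submodule R M} (h : IsCompl (ker p) C) : ∃ s : N →ₗ[R] M, p ∘ₗ s = LinearMap.id := by
  refine ⟨C.subtype ∘ₗ (quotientEquivOfIsCompl _ C h).toLinearMap ∘ₗ
    (p.quotKerEquivOfSurjective hp).symm.toLinearMap, LinearMap.ext fun y => ?_⟩
  obtain ⟨x, rfl⟩ := (p.quotKerEquivOfSurjective hp).surjective y
  simp only [comp_apply, LinearEquiv.coe_coe, LinearEquiv.symm_apply_apply, subtype_apply,
    id_apply]
  conv_rhs => rw [← mk_quotientEquivOfIsCompl_apply h x]
  rfl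

theorem exists_shortExact_comap {B F : Type*} [AddCommGroup B] [Module R B] [AddCommGroup F]
    [Module R F] {i : B →ₗ[R] F} {p : F →ₗ[R] M} (hi : Function.Injective i)
    (hp : Function.Surjective p) (hex : range i = ker p) (t : Submodule R M) :
    ∃ (i' : B →ₗ[R] t.comap p) (p' : t.comap p →ₗ[R] t),
      Function.Injective i' ∧ Function.Surjective p' ∧ range i' = ker p' := by
  have hi_mem (b : B) : i b ∈ t.comap p := by
    rw [mem_comap, show p (i b) = 0 by rw [← mem_ker, ← hex]; exact mem_range_self i b]
    exact t.zero_mem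
  refine ⟨i.codRestrict _ hi_mem, p.restrict fun _ hx => hx, fun a b hab => hi congr($hab.1),
    fun ⟨y, hy⟩ => ?_, by rw [range_codRestrict, ker_restrict, hex]⟩
  obtain ⟨x, rfl⟩ := hp y
  exact ⟨⟨x, hy⟩, rfl⟩

end LinearMap

namespace IsTorsionPair

variable {𝒯 ℱ : Set (ModuleCat.{v} R)}

theorem mem_torsion_of_surjective (htp : IsTorsionPair R 𝒯 ℱ) {T M : ModuleCat.{v} R}
    (hT : T ∈ 𝒯) (g : T →ₗ[R] M) (hg : Function.Surjective g) : M ∈ 𝒯 :=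
  htp.2.1 M fun F hF f => (cancel_right hg).1 <| by rw [zero_comp]; exact htp.1 T hT F hF _

theorem mem_free_of_injective (htp : IsTorsionPair R 𝒯 ℱ) {F M : ModuleCat.{v} R}
    (hF : F ∈ ℱ) (g : M →ₗ[R] F) (hg : Function.Injective g) : M ∈ ℱ :=
  htp.2.2 M fun T hT f => (cancel_left hg).1 <| by rw [comp_zero]; exact htp.1 T hT F hF _

theorem subsingleton_of_mem_of_mem (htp : IsTorsionPair R 𝒯 ℱ) {M : ModuleCat.{v} R}
    (hT : M ∈ 𝒯) (hF : M ∈ ℱ) : Subsingleton M :=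
  subsingleton_of_forall_eq 0 fun x => congr($(htp.1 M hT M hF LinearMap.id) x)

theorem eq_zero_of_ker_le (htp : IsTorsionPair R 𝒯 ℱ) {T F : ModuleCat.{v} R} (hT : T ∈ 𝒯)
    (hF : F ∈ ℱ) {M : Type*} [AddCommGroup M] [Module R M] {p : M →ₗ[R] T}
    (hp : Function.Surjective p) {q : M →ₗ[R] F} (hpq : ker p ≤ ker q) : q = 0 := by
  -- `q` factors through `p` via a map `T → F`, which vanishes
  have hg := htp.1 T hT F hF
    ((ker p).liftQ q hpq ∘ₗ (p.quotKerEquivOfSurjective hp).symm.toLinearMap)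
  ext x
  simpa using congr($hg (p x))

theorem mem_torsion_of_not_split (htp : IsTorsionPair R 𝒯 ℱ) (hrad : HasTorsionRadical R 𝒯 ℱ)
    {B : ModuleCat.{v} R} (hB2 : ∀ F ∈ ℱ, ∀ f : ↑B →ₗ[R] ↑F, f ≠ 0 → Function.Injective f)
    (h3 : ∀ F ∈ ℱ, ∀ M : ModuleCat.{v} R, ∀ (i : ↑B →ₗ[R] ↑F) (p : ↑F →ₗ[R] ↑M),
      Function.Injective i → Function.Surjective p → range i = ker p → M ∈ ℱ)
    {T M : ModuleCat.{v} R} (hT : T ∈ 𝒯) {i : B →ₗ[R] M} {p : M →ₗ[R] T}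
    (hp : Function.Surjective p) (hex : range i = ker p)
    (hns : ¬ ∃ s : T →ₗ[R] M, p ∘ₗ s = LinearMap.id) : M ∈ 𝒯 := by
  obtain ⟨tM, htMT, htMF⟩ := hrad M
  by_cases hf : tM.mkQ ∘ₗ i = 0
  · have htop := congr(ker $(htp.eq_zero_of_ker_le hT htMF hp (hex ▸ range_le_ker_iff.2 hf)))
    rw [ker_mkQ, ker_zero] at htop
    exact htp.mem_torsion_of_surjective htMT tM.subtype fun x => ⟨⟨x, htop ▸ mem_top⟩, rfl⟩
  refine absurd ?_ hns
  have hf_inj := hB2 _ htMF _ hf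
  have hQ := h3 _ htMF (.of R ((M ⧸ tM) ⧸ range (tM.mkQ ∘ₗ i))) _ _ hf_inj (mkQ_surjective _)
    (ker_mkQ _).symm
  have hcodis : tM ⊔ range i = ⊤ := by
    have hle : ker p ≤ ker ((range (tM.mkQ ∘ₗ i)).mkQ ∘ₗ tM.mkQ) := by
      rw [← hex, range_le_ker_iff, comp_assoc, ← range_le_ker_iff, ker_mkQ]
    simpa [ker_comp, range_comp, comap_map_mkQ] using
      congr(ker $(htp.eq_zero_of_ker_le hT hQ hp hle))
  have hdis : Disjoint (range i) tM := by
    rw [disjoint_def]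
    rintro _ ⟨b, rfl⟩ hb
    rw [show b = 0 from hf_inj (by simpa using hb), map_zero]
  have hcompl : IsCompl (ker p) tM :=
    hex ▸ ⟨hdis, codisjoint_iff.2 (by rw [sup_comm]; exact hcodis)⟩
  exact exists_rightInverse_of_isCompl_ker hp hcompl

theorem mem_free_of_shortExact (htp : IsTorsionPair R 𝒯 ℱ) (hrad : HasTorsionRadical R 𝒯 ℱ)
    {B : ModuleCat.{v} R} [Nontrivial B]
    (h3' : ∀ T ∈ 𝒯, ∀ M : ModuleCat.{v} R, ∀ (i : ↑B →ₗ[R] ↑M) (p : ↑M →ₗ[R] ↑T),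
      Function.Injective i → Function.Surjective p → range i = ker p →
      (¬ ∃ s : ↑T →ₗ[R] ↑M, p ∘ₗ s = LinearMap.id) → M ∈ 𝒯)
    {F M : ModuleCat.{v} R} (hF : F ∈ ℱ) {i : B →ₗ[R] F} {p : F →ₗ[R] M}
    (hi : Function.Injective i) (hp : Function.Surjective p) (hex : range i = ker p) : M ∈ ℱ := by
  obtain ⟨t, htT, htF⟩ := hrad M
  obtain ⟨i', p', hi', hp', hex'⟩ := exists_shortExact_comap hi hp hex t
  have hNF : ModuleCat.of R (t.comap p) ∈ ℱ := htp.mem_free_of_injective hF _ (injective_subtype _)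
  by_cases hs : ∃ s : t →ₗ[R] t.comap p, p' ∘ₗ s = LinearMap.id
  · obtain ⟨s, hs⟩ := hs
    have hs0 : s = 0 := htp.1 (.of R t) htT _ hNF s
    have htbot : t = ⊥ := by
      rw [← subsingleton_iff_eq_bot]
      exact subsingleton_of_forall_eq 0 fun x => by simpa [hs0] using congr($hs x).symm
    exact htp.mem_free_of_injective htF t.mkQ (by rw [← ker_eq_bot, ker_mkQ, htbot])
  · have := htp.subsingleton_of_mem_of_mem (h3' _ htT (.of R (t.comap p)) i' p' hi' hp' hex' hs) hNF
    exact (not_subsingleton B hi'.subsingleton).elim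

end IsTorsionPair

theorem stmt_4_general (𝒯 ℱ : Set (ModuleCat.{v} R)) (htp : IsTorsionPair R 𝒯 ℱ)
    (hrad : HasTorsionRadical R 𝒯 ℱ)
    (B : ModuleCat.{v} R) (hB0 : Nontrivial ↑B)
    (hB2 : ∀ F ∈ ℱ, ∀ f : ↑B →ₗ[R] ↑F, f ≠ 0 → Function.Injective f) :
    ((∀ F ∈ ℱ, ∀ M : ModuleCat.{v} R, ∀ (i : ↑B →ₗ[R] ↑F) (p : ↑F →ₗ[R] ↑M),
        Function.Injective i → Function.Surjective p →
        LinearMap.range i = LinearMap.ker p → M ∈ ℱ)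
      ↔
     (∀ T ∈ 𝒯, ∀ M : ModuleCat.{v} R, ∀ (i : ↑B →ₗ[R] ↑M) (p : ↑M →ₗ[R] ↑T),
        Function.Injective i → Function.Surjective p →
        LinearMap.range i = LinearMap.ker p →
        (¬ ∃ s : ↑T →ₗ[R] ↑M, p ∘ₗ s = LinearMap.id) → M ∈ 𝒯)) :=
  ⟨fun h3 _ hT _ _ _ _ hp hex hns => htp.mem_torsion_of_not_split hrad hB2 h3 hT hp hex hns,
    fun h3' _ hF _ _ _ hi hp hex => htp.mem_free_of_shortExact hrad h3' hF hi hp hex⟩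

/-- For a nonzero torsionfree module `B` all of whose nonzero maps to torsionfree
modules are injective, condition (3) (quotients of torsionfree overmodules of `B`
by `B` are torsionfree) is equivalent to condition (3') (middle terms of non-split
extensions of torsion modules by `B` are torsion). -/
theorem stmt_4 (𝒯 ℱ : Set (ModuleCat.{v} R)) (htp : IsTorsionPair R 𝒯 ℱ)
    (hrad : HasTorsionRadical R 𝒯 ℱ)
    (B : ModuleCat.{v} R) (hB0 : Nontrivial ↑B) (hBF : B ∈ ℱ)
    (hB2 : ∀ F ∈ ℱ, ∀ f : ↑B →ₗ[R] ↑F, f ≠ 0 → Function.Injective f) :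
    ((∀ F ∈ ℱ, ∀ M : ModuleCat.{v} R, ∀ (i : ↑B →ₗ[R] ↑F) (p : ↑F →ₗ[R] ↑M),
        Function.Injective i → Function.Surjective p →
        LinearMap.range i = LinearMap.ker p → M ∈ ℱ)
      ↔
     (∀ T ∈ 𝒯, ∀ M : ModuleCat.{v} R, ∀ (i : ↑B →ₗ[R] ↑M) (p : ↑M →ₗ[R] ↑T),
        Function.Injective i → Function.Surjective p →
        LinearMap.range i = LinearMap.ker p →
        (¬ ∃ s : ↑T →ₗ[R] ↑M, p ∘ₗ s = LinearMap.id) → M ∈ 𝒯)) :=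
  stmt_4_general 𝒯 ℱ htp hrad B hB0 hB2
end

section
/- Let R be a ring and (𝒯, ℱ) a torsion pair in R-Mod. If S is torsion, almost torsionfree and B is torsionfree, almost torsion for (𝒯, ℱ), then Ext¹_R(S, B) = 0. -/
universe u v
variable {R : Type u} [Ring R]

/-- `B` is torsionfree, almost torsion for `(𝒯, ℱ)`: it is a nonzero torsionfree
module, every proper quotient is torsion, and for every short exact sequence
`0 → B → F → M → 0` with `F ∈ ℱ` also `M ∈ ℱ`. -/
def IsTFAlmostTorsion (𝒯 ℱ : Set (ModuleCat.{v} R)) (B : ModuleCat.{v} R) : Prop :=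
  Nontrivial ↑B ∧ B ∈ ℱ ∧
  (∀ N : Submodule R ↑B, N ≠ ⊥ → ModuleCat.of R (↑B ⧸ N) ∈ 𝒯) ∧
  (∀ F ∈ ℱ, ∀ i : ↑B →ₗ[R] ↑F, Function.Injective i →
    ModuleCat.of R (↑F ⧸ LinearMap.range i) ∈ ℱ)


/-- `S` is torsion, almost torsionfree for `(𝒯, ℱ)`: it is a nonzero torsion module,
every proper submodule is torsionfree, and for every short exact sequence
`0 → K → T → S → 0` with `T ∈ 𝒯` also `K ∈ 𝒯`. -/
def IsTAlmostTorsionFree (𝒯 ℱ : Set (ModuleCat.{v} R)) (S : ModuleCat.{v} R) : Prop :=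
  Nontrivial ↑S ∧ S ∈ 𝒯 ∧
  (∀ N : Submodule R ↑S, N ≠ ⊤ → ModuleCat.of R N ∈ ℱ) ∧
  (∀ T ∈ 𝒯, ∀ p : ↑T →ₗ[R] ↑S, Function.Surjective p →
    ModuleCat.of R (LinearMap.ker p) ∈ 𝒯)

/-!
The middle term `E` of `0 → B → E → S → 0` cannot be torsionfree: otherwise `E/B ≅ S` would be
torsionfree by the extension property of `B`, while `S` is torsion and nonzero. Hence `E` has a
nonzero torsion submodule `N` (the image of a nonzero map out of `𝒯`). The image of `N` in `S` is
torsion, so it cannot be a proper submodule (those are torsionfree) unless it is zero, and it is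
not zero since otherwise `N ⊆ B` would also be torsionfree. So `N` maps onto `S`; the kernel is
torsion by the extension property of `S` and lies in `B`, so it vanishes, and `N ≅ S` splits `p`.
-/

namespace IsTorsionPair

variable {𝒯 ℱ : Set (ModuleCat.{v} R)}
variable {X Y : Type v} [AddCommGroup X] [Module R X] [AddCommGroup Y] [Module R Y]

theorem mem_torsion_of_surjective_s7 (htp : IsTorsionPair R 𝒯 ℱ) (hX : ModuleCat.of R X ∈ 𝒯)
    (f : X →ₗ[R] Y) (hf : Function.Surjective f) : ModuleCat.of R Y ∈ 𝒯 :=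
  htp.2.1 _ fun F hF g =>
    (LinearMap.cancel_right hf).1 <| by rw [LinearMap.zero_comp]; exact htp.1 _ hX F hF (g ∘ₗ f)

theorem mem_torsionFree_of_injective (htp : IsTorsionPair R 𝒯 ℱ) (hY : ModuleCat.of R Y ∈ ℱ)
    (f : X →ₗ[R] Y) (hf : Function.Injective f) : ModuleCat.of R X ∈ ℱ :=
  htp.2.2 _ fun T hT g =>
    (LinearMap.cancel_left hf).1 <| by rw [LinearMap.comp_zero]; exact htp.1 T hT _ hY (f ∘ₗ g)

theorem subsingleton_of_mem_torsion_of_mem_torsionFree (htp : IsTorsionPair R 𝒯 ℱ)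
    (h𝒯 : ModuleCat.of R X ∈ 𝒯) (hℱ : ModuleCat.of R X ∈ ℱ) : Subsingleton X :=
  have hid : (LinearMap.id : X →ₗ[R] X) = 0 := htp.1 _ h𝒯 _ hℱ LinearMap.id
  subsingleton_of_forall_eq 0 fun x => LinearMap.congr_fun hid x

theorem eq_bot_of_mem_torsion_of_mem_torsionFree (htp : IsTorsionPair R 𝒯 ℱ) {N : Submodule R X}
    (h𝒯 : ModuleCat.of R N ∈ 𝒯) (hℱ : ModuleCat.of R N ∈ ℱ) : N = ⊥ :=
  have := htp.subsingleton_of_mem_torsion_of_mem_torsionFree h𝒯 hℱ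
  Submodule.eq_bot_of_subsingleton

section ShortExact

variable {B E S : ModuleCat.{v} R} {i : B →ₗ[R] E} {p : E →ₗ[R] S}

theorem mem_torsionFree_of_comp_eq_zero (htp : IsTorsionPair R 𝒯 ℱ) (hB : B ∈ ℱ)
    (hi : Function.Injective i) (hrange : LinearMap.range i = LinearMap.ker p)
    (f : X →ₗ[R] E) (hf : Function.Injective f) (hpf : p ∘ₗ f = 0) : ModuleCat.of R X ∈ ℱ := by
  have hfi : LinearMap.range f ≤ LinearMap.range i := hrange ▸ LinearMap.range_le_ker_iff.2 hpf
  let g : X →ₗ[R] B := (LinearEquiv.ofInjective i hi).symm.toLinearMap ∘ₗ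
    LinearMap.codRestrict _ f fun x => hfi ⟨x, rfl⟩
  exact htp.mem_torsionFree_of_injective hB g fun x y hxy =>
    hf (congrArg Subtype.val ((LinearEquiv.ofInjective i hi).symm.injective hxy))

theorem middle_not_mem_torsionFree (htp : IsTorsionPair R 𝒯 ℱ) [Nontrivial S] (hS : S ∈ 𝒯)
    (hBext : ∀ F ∈ ℱ, ∀ j : ↑B →ₗ[R] ↑F, Function.Injective j →
      ModuleCat.of R (↑F ⧸ LinearMap.range j) ∈ ℱ)
    (hi : Function.Injective i) (hp : Function.Surjective p)
    (hrange : LinearMap.range i = LinearMap.ker p) : E ∉ ℱ := by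
  intro hE
  let e : (E ⧸ LinearMap.ker p) ≃ₗ[R] S := p.quotKerEquivOfSurjective hp
  have hℱ : ModuleCat.of R (E ⧸ LinearMap.ker p) ∈ ℱ := hrange ▸ hBext E hE i hi
  have h𝒯 : ModuleCat.of R (E ⧸ LinearMap.ker p) ∈ 𝒯 :=
    htp.mem_torsion_of_surjective_s7 hS e.symm.toLinearMap e.symm.surjective
  have := htp.subsingleton_of_mem_torsion_of_mem_torsionFree h𝒯 hℱ
  exact not_subsingleton S e.symm.toEquiv.subsingleton

theorem map_eq_top_of_mem_torsion (htp : IsTorsionPair R 𝒯 ℱ) (hB : B ∈ ℱ)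
    (hi : Function.Injective i) (hrange : LinearMap.range i = LinearMap.ker p)
    (hSsub : ∀ N : Submodule R ↑S, N ≠ ⊤ → ModuleCat.of R N ∈ ℱ)
    {N : Submodule R E} (hN : ModuleCat.of R N ∈ 𝒯) (hN0 : N ≠ ⊥) : N.map p = ⊤ := by
  by_contra hne
  have himage : N.map p = ⊥ := htp.eq_bot_of_mem_torsion_of_mem_torsionFree
    (htp.mem_torsion_of_surjective_s7 hN _ (p.submoduleMap_surjective N)) (hSsub _ hne)
  have hpN : p ∘ₗ N.subtype = 0 := by
    rw [← LinearMap.range_le_ker_iff, Submodule.range_subtype, LinearMap.le_ker_iff_map]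
    exact himage
  exact hN0 <| htp.eq_bot_of_mem_torsion_of_mem_torsionFree hN <|
    htp.mem_torsionFree_of_comp_eq_zero hB hi hrange _ N.subtype_injective hpN

theorem exists_rightInverse_of_mem_torsion (htp : IsTorsionPair R 𝒯 ℱ) (hB : B ∈ ℱ)
    (hi : Function.Injective i) (hrange : LinearMap.range i = LinearMap.ker p)
    (hSsub : ∀ N : Submodule R ↑S, N ≠ ⊤ → ModuleCat.of R N ∈ ℱ)
    (hSker : ∀ T ∈ 𝒯, ∀ q : ↑T →ₗ[R] ↑S, Function.Surjective q →
      ModuleCat.of R (LinearMap.ker q) ∈ 𝒯)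
    {N : Submodule R E} (hN : ModuleCat.of R N ∈ 𝒯) (hN0 : N ≠ ⊥) :
    ∃ s : S →ₗ[R] E, p ∘ₗ s = LinearMap.id := by
  set q : N →ₗ[R] S := p ∘ₗ N.subtype
  have hq_surj : Function.Surjective q := by
    rw [← LinearMap.range_eq_top, LinearMap.range_comp, Submodule.range_subtype]
    exact htp.map_eq_top_of_mem_torsion hB hi hrange hSsub hN hN0
  have hq_inj : Function.Injective q := by
    rw [← LinearMap.ker_eq_bot]
    refine htp.eq_bot_of_mem_torsion_of_mem_torsionFree (hSker _ hN q hq_surj) ?_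
    exact htp.mem_torsionFree_of_comp_eq_zero hB hi hrange (N.subtype ∘ₗ (LinearMap.ker q).subtype)
      (N.subtype_injective.comp (LinearMap.ker q).subtype_injective) q.comp_ker_subtype
  let e : N ≃ₗ[R] S := LinearEquiv.ofBijective q ⟨hq_inj, hq_surj⟩
  exact ⟨N.subtype ∘ₗ e.symm.toLinearMap, LinearMap.ext e.apply_symm_apply⟩

end ShortExact

end IsTorsionPair

/-- If `S` is torsion, almost torsionfree and `B` is torsionfree, almost torsion
for the same torsion pair, then `Ext¹(S, B) = 0`: every short exact sequence
`0 → B → E → S → 0` splits. -/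
theorem stmt_7 (𝒯 ℱ : Set (ModuleCat.{v} R)) (htp : IsTorsionPair R 𝒯 ℱ)
    (S B : ModuleCat.{v} R)
    (hS : IsTAlmostTorsionFree 𝒯 ℱ S) (hB : IsTFAlmostTorsion 𝒯 ℱ B) :
    ∀ (E : ModuleCat.{v} R) (i : ↑B →ₗ[R] ↑E) (p : ↑E →ₗ[R] ↑S),
      Function.Injective i → Function.Surjective p →
      LinearMap.range i = LinearMap.ker p →
      ∃ s : ↑S →ₗ[R] ↑E, p ∘ₗ s = LinearMap.id := by
  intro E i p hi hp hrange
  obtain ⟨hSnt, hS𝒯, hSsub, hSker⟩ := hS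
  obtain ⟨-, hBℱ, -, hBext⟩ := hB
  have hE : E ∉ ℱ := htp.middle_not_mem_torsionFree hS𝒯 hBext hi hp hrange
  obtain ⟨T, hT, g, hg⟩ : ∃ T ∈ 𝒯, ∃ g : T →ₗ[R] E, g ≠ 0 := by
    by_contra! h
    exact hE (htp.2.2 E h)
  exact htp.exists_rightInverse_of_mem_torsion hBℱ hi hrange hSsub hSker
    (htp.mem_torsion_of_surjective_s7 hT g.rangeRestrict g.surjective_rangeRestrict)
    (LinearMap.range_eq_bot.not.2 hg)
end

section
/- Let R be a ring and (𝒯, ℱ) a torsion pair in R-Mod with ℱ = {M : Hom(t, M) = 0 for all t ∈ 𝐭} where 𝐭 = 𝒯 ∩ R-mod consists of the finitely generated torsion modules, and assume 𝐭 is closed under quotients. Then every torsion, almost torsionfree module for (𝒯, ℱ) is finitely generated. -/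
universe u v
variable {R : Type u} [Ring R]

/-- If `(𝒯, ℱ)` is a torsion pair whose torsionfree class is `𝐭^{⊥₀}` for the class
`𝐭` of finitely generated torsion modules, and `𝐭` is closed under quotients,
then every torsion, almost torsionfree module is finitely generated. -/
theorem stmt_10 (𝒯 ℱ : Set (ModuleCat.{v} R)) (htp : IsTorsionPair R 𝒯 ℱ)
    (hF : ∀ M : ModuleCat.{v} R,
      M ∈ ℱ ↔ ∀ U ∈ 𝒯, Module.Finite R ↑U → ∀ f : ↑U →ₗ[R] ↑M, f = 0)
    (hquot : ∀ U ∈ 𝒯, Module.Finite R ↑U →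
      ∀ N : Submodule R ↑U, ModuleCat.of R (↑U ⧸ N) ∈ 𝒯)
    (T : ModuleCat.{v} R) (hT : IsTAlmostTorsionFree 𝒯 ℱ T) :
    Module.Finite R ↑T := by
  by_contra hnf
  obtain ⟨hnt, hTt, hprop, _⟩ := hT
  have hTF : T ∈ ℱ := by
    rw [hF]
    intro U hU hfin f
    -- the image of f is a proper submodule, hence torsionfree
    have hrange : LinearMap.range f ≠ ⊤ := by
      intro htop
      exact hnf (Module.Finite.of_surjective f (LinearMap.range_eq_top.mp htop))
    have hrF : ModuleCat.of R (LinearMap.range f) ∈ ℱ := hprop _ hrange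
    -- U ⧸ ker f is torsion and maps onto the range
    have hqT : ModuleCat.of R (↑U ⧸ LinearMap.ker f) ∈ 𝒯 := hquot U hU hfin _
    have hzero := htp.1 _ hqT _ hrF
      ((f.quotKerEquivRange : (↑U ⧸ LinearMap.ker f) →ₗ[R] LinearMap.range f))
    -- so the iso is zero, hence range is trivial
    ext x
    have h1 : f.quotKerEquivRange (Submodule.Quotient.mk x)
        = (0 : (↑U ⧸ LinearMap.ker f) →ₗ[R] LinearMap.range f)
            (Submodule.Quotient.mk x) := by
      rw [← hzero]; rfl
    have h2 := congrArg Subtype.val h1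
    rw [f.quotKerEquivRange_apply_mk x] at h2
    simpa using h2
  have := htp.1 T hTt T hTF LinearMap.id
  obtain ⟨x, y, hxy⟩ := hnt
  apply hxy
  have hx : (LinearMap.id : ↑T →ₗ[R] ↑T) x = (0 : ↑T →ₗ[R] ↑T) x := by rw [this]
  have hy : (LinearMap.id : ↑T →ₗ[R] ↑T) y = (0 : ↑T →ₗ[R] ↑T) y := by rw [this]
  simp only [LinearMap.id_apply, LinearMap.zero_apply] at hx hy
  rw [hx, hy]
end

section
/- Let R be a ring and B a nonzero left R-module that is a brick (End_R(B) is a division ring). Consider the torsion pair (𝒯, ℱ) = (^{⊥₀}(B^{⊥₀}), B^{⊥₀}) cogenerated by B^{⊥₀}, where B^{⊥₀} = {M : Hom(B, M) = 0}. Then B is torsion, almost torsionfree with respect to this torsion pair: (1) B ∈ 𝒯; (2) every proper submodule of B lies in ℱ; (3) every short exact sequence 0 → F → M → B → 0 with F ∈ ℱ and M ∉ ℱ splits. -/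
universe u v
variable {R : Type u} [Ring R]

/-- The torsion class `⁽⊥₀⁾(B^{⊥₀})` of the torsion pair generated by `B`. -/
def genTorsionClass (R : Type u) [Ring R] (B : ModuleCat.{v} R) :
    Set (ModuleCat.{v} R) :=
  {M | ∀ Y : ModuleCat.{v} R, (∀ g : ↑B →ₗ[R] ↑Y, g = 0) → ∀ f : ↑M →ₗ[R] ↑Y, f = 0}

/-- The torsionfree class `B^{⊥₀} = {M | Hom(B, M) = 0}` of the torsion pair
generated by `B`. -/
def genTorsionFreeClass (R : Type u) [Ring R] (B : ModuleCat.{v} R) :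
    Set (ModuleCat.{v} R) :=
  {M | ∀ f : ↑B →ₗ[R] ↑M, f = 0}

/-- `B` is a brick: it is nonzero and every nonzero endomorphism is invertible. -/
def IsBrick (R : Type u) [Ring R] (B : ModuleCat.{v} R) : Prop :=
  Nontrivial ↑B ∧ ∀ f : ↑B →ₗ[R] ↑B, f ≠ 0 → Function.Bijective f

/-! Since `B` is a brick, maps `f : B → X` and `p : X → B` with `p ∘ f ≠ 0` make `p` a split
epimorphism, with section `f ∘ (p ∘ f)⁻¹`. For a proper submodule `N ⊆ B` the composite
`B → N ↪ B` is not surjective, so every map `B → N` vanishes. For an extension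
`0 → F → M → B → 0` and a nonzero `f : B → M`, the composite `B → M → B` cannot vanish, since
then `f` would factor through the torsionfree `F`. -/

theorem mem_genTorsionClass_self (B : ModuleCat.{v} R) : B ∈ genTorsionClass R B :=
  fun _ hY f => hY f

theorem eq_zero_of_comp_eq_zero_of_mem_genTorsionFreeClass {B F M : ModuleCat.{v} R}
    (hF : F ∈ genTorsionFreeClass R B) {i : F →ₗ[R] M} {p : M →ₗ[R] B}
    (hi : Function.Injective i) (hex : LinearMap.range i = LinearMap.ker p)
    {f : B →ₗ[R] M} (hpf : p ∘ₗ f = 0) : f = 0 := by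
  have hf : ∀ b, f b ∈ LinearMap.range i := fun b => by
    rw [hex, LinearMap.mem_ker]
    exact LinearMap.congr_fun hpf b
  have hg : (LinearEquiv.ofInjective i hi).symm.toLinearMap ∘ₗ
      f.codRestrict (LinearMap.range i) hf = 0 := hF _
  ext b
  have hib : i ((LinearEquiv.ofInjective i hi).symm ⟨f b, hf b⟩) = f b :=
    congrArg Subtype.val ((LinearEquiv.ofInjective i hi).apply_symm_apply ⟨f b, hf b⟩)
  rw [← hib]
  simpa using congrArg i (LinearMap.congr_fun hg b)

namespace IsBrick

variable {B : ModuleCat.{v} R}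

theorem eq_top_of_ne_zero (hB : IsBrick R B) {N : Submodule R B} {f : B →ₗ[R] N} (hf : f ≠ 0) :
    N = ⊤ := by
  have hsf : N.subtype ∘ₗ f ≠ 0 := fun h =>
    hf (LinearMap.ext fun b => Subtype.ext (LinearMap.congr_fun h b))
  have hrange : LinearMap.range (N.subtype ∘ₗ f) = ⊤ :=
    LinearMap.range_eq_top.mpr (hB.2 _ hsf).2
  rw [eq_top_iff, ← hrange]
  exact (LinearMap.range_comp_le_range f N.subtype).trans N.range_subtype.le

theorem submodule_mem_genTorsionFreeClass (hB : IsBrick R B) {N : Submodule R B} (hN : N ≠ ⊤) :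
    ModuleCat.of R N ∈ genTorsionFreeClass R B :=
  fun _ => by_contra fun hf => hN (hB.eq_top_of_ne_zero hf)

theorem exists_comp_eq_id_of_comp_ne_zero (hB : IsBrick R B) {M : Type*} [AddCommGroup M]
    [Module R M] {p : M →ₗ[R] B} {f : B →ₗ[R] M} (hpf : p ∘ₗ f ≠ 0) :
    ∃ s : B →ₗ[R] M, p ∘ₗ s = LinearMap.id := by
  let e := LinearEquiv.ofBijective (p ∘ₗ f) (hB.2 _ hpf)
  exact ⟨f ∘ₗ e.symm.toLinearMap, LinearMap.ext e.apply_symm_apply⟩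

end IsBrick

/-- A brick `B` is torsion, almost torsionfree with respect to the torsion pair
`(⁽⊥₀⁾(B^{⊥₀}), B^{⊥₀})` generated by `B`: (1) `B` is torsion; (2) every proper
submodule of `B` is torsionfree; (3) every short exact sequence
`0 → F → M → B → 0` with `F` torsionfree and `M` not torsionfree splits. -/
theorem stmt_11 (B : ModuleCat.{v} R) (hB : IsBrick R B) :
    B ∈ genTorsionClass R B ∧
    (∀ N : Submodule R ↑B, N ≠ ⊤ → ModuleCat.of R N ∈ genTorsionFreeClass R B) ∧
    (∀ (F M : ModuleCat.{v} R), F ∈ genTorsionFreeClass R B →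
      ∀ (i : ↑F →ₗ[R] ↑M) (p : ↑M →ₗ[R] ↑B),
        Function.Injective i → Function.Surjective p →
        LinearMap.range i = LinearMap.ker p →
        M ∉ genTorsionFreeClass R B →
        ∃ s : ↑B →ₗ[R] ↑M, p ∘ₗ s = LinearMap.id) := by
  refine ⟨mem_genTorsionClass_self B, fun _ => hB.submodule_mem_genTorsionFreeClass, ?_⟩
  intro F M hF i p hi _ hex hM
  obtain ⟨f, hf⟩ : ∃ f : B →ₗ[R] M, f ≠ 0 := by
    simpa [genTorsionFreeClass] using hM
  exact hB.exists_comp_eq_id_of_comp_ne_zero fun hpf =>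
    hf (eq_zero_of_comp_eq_zero_of_mem_genTorsionFreeClass hF hi hex hpf)
end

section
/- Let R be a ring and B a brick. Then B is, up to isomorphism, the unique torsion, almost torsionfree module for the torsion pair generated by B: if S is any torsion, almost torsionfree module for (𝐓(B), B^{⊥₀}), then S ≅ B. -/
universe u v
variable {R : Type u} [Ring R]

/-- A brick `B` is, up to isomorphism, the unique torsion, almost torsionfree module
for the torsion pair `(𝐓(B), B^{⊥₀})` generated by `B`. -/
theorem stmt_12 (B : ModuleCat.{v} R) (hB : IsBrick R B)
    (S : ModuleCat.{v} R)
    (hS : IsTAlmostTorsionFree (genTorsionClass R B) (genTorsionFreeClass R B) S) :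
    Nonempty (↑S ≃ₗ[R] ↑B) := by
  obtain ⟨hBnt, hBbrick⟩ := hB
  obtain ⟨hSnt, hST, hSsub, hSker⟩ := hS
  -- B is in the torsion class
  have hBT : B ∈ genTorsionClass R B := fun Y hY f => hY f
  -- there is a nonzero map f : B →ₗ S
  have hex : ∃ f : ↑B →ₗ[R] ↑S, f ≠ 0 := by
    by_contra h
    push_neg at h
    have hSF : S ∈ genTorsionFreeClass R B := h
    have hid : (LinearMap.id : ↑S →ₗ[R] ↑S) = 0 := hST S hSF _
    obtain ⟨x, y, hxy⟩ := hSnt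
    exact hxy (by
      have hx := congrArg (fun g : ↑S →ₗ[R] ↑S => g x) hid
      have hy := congrArg (fun g : ↑S →ₗ[R] ↑S => g y) hid
      simp only [LinearMap.id_coe, id_eq, LinearMap.zero_apply] at hx hy
      rw [hx, hy])
  obtain ⟨f, hf⟩ := hex
  -- f is surjective
  have hsurj : Function.Surjective f := by
    rw [← LinearMap.range_eq_top]
    by_contra hne
    have hF := hSsub (LinearMap.range f) hne
    have : f.rangeRestrict = 0 := hF f.rangeRestrict
    apply hf
    ext b
    have := congrArg (fun g : ↑B →ₗ[R] ↥(LinearMap.range f) => ((g b : ↥(LinearMap.range f)) : ↑S)) this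
    simpa using this
  -- the kernel of f is in the torsion class
  have hKT : ModuleCat.of R (LinearMap.ker f) ∈ genTorsionClass R B :=
    hSker B hBT f hsurj
  -- every map B → ker f is zero
  have hKzero : ∀ g : ↑B →ₗ[R] ↥(LinearMap.ker f), g = 0 := by
    intro g
    by_contra hg
    have hcomp : (LinearMap.ker f).subtype ∘ₗ g ≠ 0 := by
      intro h0
      apply hg
      ext b
      have := congrArg (fun h : ↑B →ₗ[R] ↑B => h b) h0
      simp only [LinearMap.coe_comp, Function.comp_apply, Submodule.coe_subtype,
        LinearMap.zero_apply] at this ⊢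
      simpa using this
    have hbij := hBbrick _ hcomp
    -- f ∘ (subtype ∘ g) = 0, but subtype ∘ g is surjective ⇒ f = 0, contradiction
    apply hf
    ext b
    obtain ⟨a, ha⟩ := hbij.2 b
    have hmem : ((LinearMap.ker f).subtype ∘ₗ g) a ∈ LinearMap.ker f := by
      simp only [LinearMap.coe_comp, Function.comp_apply, Submodule.coe_subtype]
      exact (g a).2
    rw [← ha]
    simp only [LinearMap.mem_ker] at hmem; simp [hmem]
  -- hence ker f ∈ ℱ, and being also in 𝒯, it is zero
  have hKF : ModuleCat.of R (LinearMap.ker f) ∈ genTorsionFreeClass R B := hKzero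
  have hidK : (LinearMap.id : ↥(LinearMap.ker f) →ₗ[R] ↥(LinearMap.ker f)) = 0 :=
    hKT (ModuleCat.of R (LinearMap.ker f)) hKF _
  have hinj : Function.Injective f := by
    rw [← LinearMap.ker_eq_bot]
    ext x
    simp only [Submodule.mem_bot]
    constructor
    · intro hx
      have := congrArg (fun h : ↥(LinearMap.ker f) →ₗ[R] ↥(LinearMap.ker f) => ((h ⟨x, hx⟩ : ↥(LinearMap.ker f)) : ↑B)) hidK
      simpa using this
    · intro hx; rw [hx]; simp
  exact ⟨(LinearEquiv.ofBijective f ⟨hinj, hsurj⟩).symm⟩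
end

section
/- Let (𝒯, ℱ) be a torsion pair in R-Mod and B a module satisfying condition (3'): every non-split short exact sequence 0 → B → M → T → 0 with T ∈ 𝒯 has M ∈ 𝒯. Then B satisfies condition (3): for every short exact sequence 0 → B → F → M → 0 with F ∈ ℱ, the module M lies in ℱ. -/
/-!
To see that `M` is torsionfree, take `f : T → M` with `T` torsion and pull the sequence
`0 → B → F → M → 0` back along `f`, getting `0 → B → F ×_M T → T → 0`. If it does not split,
(3') makes `F ×_M T` torsion, so its projection to the torsionfree `F` vanishes; but that
projection restricts to the injection `B → F` and `B ≠ 0`. If it splits by `s`, then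
`T → F ×_M T → F` vanishes, and `f = p ∘ pr₁ ∘ s = 0`.
-/

universe u v
variable {R : Type u} [Ring R]

namespace LinearMap

variable {B F M T : Type*} [AddCommGroup B] [Module R B] [AddCommGroup F] [Module R F]
  [AddCommGroup M] [Module R M] [AddCommGroup T] [Module R T]
  (p : F →ₗ[R] M) (f : T →ₗ[R] M)

/-- The fibre product `F ×_M T` of `p` and `f`, as a submodule of `F × T`. -/
def pullback : Submodule R (F × T) :=
  eqLocus (p ∘ₗ fst R F T) (f ∘ₗ snd R F T)

def pullbackFst : p.pullback f →ₗ[R] F :=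
  fst R F T ∘ₗ (p.pullback f).subtype

def pullbackSnd : p.pullback f →ₗ[R] T :=
  snd R F T ∘ₗ (p.pullback f).subtype

theorem pullback_comm : p ∘ₗ p.pullbackFst f = f ∘ₗ p.pullbackSnd f :=
  ext fun x => x.2

def pullbackInl (i : B →ₗ[R] F) (hpi : p ∘ₗ i = 0) : B →ₗ[R] p.pullback f :=
  codRestrict _ (i.prod 0) fun b => by
    simpa [pullback] using LinearMap.congr_fun hpi b

theorem pullbackFst_comp_pullbackInl (i : B →ₗ[R] F) (hpi : p ∘ₗ i = 0) :
    p.pullbackFst f ∘ₗ p.pullbackInl f i hpi = i :=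
  rfl

variable {p f}

theorem pullbackSnd_surjective (hp : Function.Surjective p) :
    Function.Surjective (p.pullbackSnd f) := by
  intro t
  obtain ⟨x, hx⟩ := hp (f t)
  exact ⟨⟨(x, t), hx⟩, rfl⟩

theorem pullbackInl_injective {i : B →ₗ[R] F} (hpi : p ∘ₗ i = 0) (hi : Function.Injective i) :
    Function.Injective (p.pullbackInl f i hpi) :=
  fun _ _ h => hi (congrArg (fun x => x.1.1) h)

theorem range_pullbackInl_eq_ker_pullbackSnd {i : B →ₗ[R] F} (hpi : p ∘ₗ i = 0)
    (hexact : range i = ker p) : range (p.pullbackInl f i hpi) = ker (p.pullbackSnd f) := by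
  ext ⟨⟨x, t⟩, hxt⟩
  constructor
  · rintro ⟨b, hb⟩
    exact congrArg (fun y => y.1.2) hb.symm
  · intro ht
    obtain rfl : t = 0 := ht
    obtain ⟨b, rfl⟩ : x ∈ range i := hexact ▸ (hxt.trans f.map_zero)
    exact ⟨b, rfl⟩

end LinearMap

theorem stmt_14_general (𝒯 ℱ : Set (ModuleCat.{v} R)) (htp : IsTorsionPair R 𝒯 ℱ)
    (B : ModuleCat.{v} R) (hB0 : Nontrivial ↑B)
    (h3' : ∀ T ∈ 𝒯, ∀ M : ModuleCat.{v} R, ∀ (i : ↑B →ₗ[R] ↑M) (p : ↑M →ₗ[R] ↑T),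
      Function.Injective i → Function.Surjective p →
      LinearMap.range i = LinearMap.ker p →
      (¬ ∃ s : ↑T →ₗ[R] ↑M, p ∘ₗ s = LinearMap.id) → M ∈ 𝒯) :
    ∀ F ∈ ℱ, ∀ M : ModuleCat.{v} R, ∀ (i : ↑B →ₗ[R] ↑F) (p : ↑F →ₗ[R] ↑M),
      Function.Injective i → Function.Surjective p →
      LinearMap.range i = LinearMap.ker p → M ∈ ℱ := by
  intro F hF M i p hi hp hexact
  have hpi : p ∘ₗ i = 0 := LinearMap.range_le_ker_iff.mp hexact.le
  refine htp.2.2 M fun T hT f => ?_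
  let P := ModuleCat.of R (p.pullback f)
  by_cases hsplit : ∃ s : T →ₗ[R] P, p.pullbackSnd f ∘ₗ s = LinearMap.id
  · obtain ⟨s, hs⟩ := hsplit
    have hs0 : p.pullbackFst f ∘ₗ s = 0 := htp.1 T hT F hF _
    calc f = f ∘ₗ p.pullbackSnd f ∘ₗ s := by rw [hs, LinearMap.comp_id]
      _ = p ∘ₗ p.pullbackFst f ∘ₗ s := by rw [← LinearMap.comp_assoc, ← p.pullback_comm f]; rfl
      _ = 0 := by rw [hs0, LinearMap.comp_zero]
  · have hPT : P ∈ 𝒯 := h3' T hT P (p.pullbackInl f i hpi) (p.pullbackSnd f)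
      (LinearMap.pullbackInl_injective hpi hi) (LinearMap.pullbackSnd_surjective hp)
      (LinearMap.range_pullbackInl_eq_ker_pullbackSnd hpi hexact) hsplit
    have hi0 : i = 0 := by
      rw [← p.pullbackFst_comp_pullbackInl f i hpi, htp.1 P hPT F hF (p.pullbackFst f),
        LinearMap.zero_comp]
    obtain ⟨b, hb⟩ := exists_ne (0 : B)
    exact absurd (hi (by simp [hi0])) hb

/-- If a nonzero torsionfree module `B` satisfies condition (3') — every non-split
short exact sequence `0 → B → M → T → 0` with `T` torsion has `M` torsion — then it
satisfies condition (3): for every short exact sequence `0 → B → F → M → 0` with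
`F` torsionfree, `M` is torsionfree. -/
theorem stmt_14 (𝒯 ℱ : Set (ModuleCat.{v} R)) (htp : IsTorsionPair R 𝒯 ℱ)
    (hrad : HasTorsionRadical R 𝒯 ℱ)
    (B : ModuleCat.{v} R) (hB0 : Nontrivial ↑B) (hBF : B ∈ ℱ)
    (h3' : ∀ T ∈ 𝒯, ∀ M : ModuleCat.{v} R, ∀ (i : ↑B →ₗ[R] ↑M) (p : ↑M →ₗ[R] ↑T),
      Function.Injective i → Function.Surjective p →
      LinearMap.range i = LinearMap.ker p →
      (¬ ∃ s : ↑T →ₗ[R] ↑M, p ∘ₗ s = LinearMap.id) → M ∈ 𝒯) :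
    ∀ F ∈ ℱ, ∀ M : ModuleCat.{v} R, ∀ (i : ↑B →ₗ[R] ↑F) (p : ↑F →ₗ[R] ↑M),
      Function.Injective i → Function.Surjective p →
      LinearMap.range i = LinearMap.ker p → M ∈ ℱ :=
  stmt_14_general 𝒯 ℱ htp B hB0 h3'
end

section
/- Let L be the complete lattice of torsion classes (abstractly: any complete lattice), and suppose x ∈ L is such that the set U = {y ∈ L : y > x} is nonempty, every element of U is co-compact, x = ⨅ U, and x is maximal among elements of L that are not co-compact. Then x is meet-irreducible: if x = a ⊓ b with a, b ∈ L, then x = a or x = b. -/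
/-- An element `c` of a complete lattice is co-compact (dually compact) if whenever
`⨅ S ≤ c`, there is a finite subset of `S` whose infimum is already `≤ c`. -/
def IsCoCompactElement {L : Type*} [CompleteLattice L] (c : L) : Prop :=
  ∀ S : Set L, sInf S ≤ c → ∃ t : Finset L, ↑t ⊆ S ∧ sInf (↑t : Set L) ≤ c

/-- A finite infimum of co-compact elements is co-compact. -/
lemma isCoCompactElement_sInf_finset {L : Type*} [CompleteLattice L] (t : Finset L)
    (h : ∀ y ∈ t, IsCoCompactElement y) : IsCoCompactElement (sInf (↑t : Set L)) := by
  classical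
  intro S hS
  choose F hF1 hF2 using fun (y : L) (hy : y ∈ t) =>
    h y hy S (hS.trans (sInf_le (by exact_mod_cast hy)))
  refine ⟨t.attach.biUnion (fun y => F y.1 y.2), ?_, ?_⟩
  · intro z hz
    simp only [Finset.coe_biUnion, Set.mem_iUnion, Finset.mem_coe] at hz
    obtain ⟨y, _, hz⟩ := hz
    exact hF1 _ _ hz
  · apply le_sInf
    intro y hy
    have hy' : y ∈ t := by exact_mod_cast hy
    refine le_trans ?_ (hF2 y hy')
    apply sInf_le_sInf
    intro z hz
    simp only [Finset.coe_biUnion, Set.mem_iUnion, Finset.mem_coe]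
    exact ⟨⟨y, hy'⟩, Finset.mem_attach _ _, hz⟩

/-- If `x` is not co-compact, is maximal among non-co-compact elements, the set
`U = {y | x < y}` is nonempty and consists of co-compact elements, and `x = ⨅ U`,
then `x` is meet-irreducible. -/
theorem stmt_15 {L : Type*} [CompleteLattice L] (x : L)
    (hUne : {y : L | x < y}.Nonempty)
    (hUcc : ∀ y : L, x < y → IsCoCompactElement y)
    (hinf : x = sInf {y : L | x < y})
    (hxncc : ¬ IsCoCompactElement x)
    (hmax : ∀ y : L, ¬ IsCoCompactElement y → x ≤ y → y = x) :
    ∀ a b : L, x = a ⊓ b → x = a ∨ x = b := by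
  classical
  intro a b hab
  by_contra hcon
  push_neg at hcon
  obtain ⟨hane, hbne⟩ := hcon
  have hxa : x < a := lt_of_le_of_ne (hab ▸ inf_le_left) hane
  have hxb : x < b := lt_of_le_of_ne (hab ▸ inf_le_right) hbne
  obtain ⟨ta, hta1, hta2⟩ := hUcc a hxa _ (hinf.ge.trans hxa.le)
  obtain ⟨tb, htb1, htb2⟩ := hUcc b hxb _ (hinf.ge.trans hxb.le)
  set t := ta ∪ tb with ht
  have hsub : (↑t : Set L) ⊆ {y : L | x < y} := by
    intro z hz
    rcases Finset.mem_union.mp (by exact_mod_cast hz) with h | h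
    · exact hta1 (by exact_mod_cast h)
    · exact htb1 (by exact_mod_cast h)
  have hle : sInf (↑t : Set L) ≤ x := by
    rw [hab]
    refine le_inf (le_trans ?_ hta2) (le_trans ?_ htb2) <;>
      exact sInf_le_sInf (by intro z hz; simp [ht]; simp at hz; tauto)
  have hge : x ≤ sInf (↑t : Set L) := le_sInf fun y hy => (hsub hy).le
  have heq : sInf (↑t : Set L) = x := le_antisymm hle hge
  apply hxncc
  rw [← heq]
  exact isCoCompactElement_sInf_finset t fun y hy => hUcc y (hsub (by exact_mod_cast hy))
end

section
/- Let R be a ring, (𝒯, ℱ) a torsion pair in R-Mod, and S a torsion, almost torsionfree module. Then given any surjection h : T ↠ S with T ∈ 𝒯 and any short exact sequence 0 → K → M → S → 0 with M ∈ 𝒯 such that ker h ∈ 𝒯, the pullback P of M → S and T → S sits in a split exact sequence 0 → K → P → T → 0; consequently K ∈ 𝒯 whenever the pullback's second projection P → T admits a section. -/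
universe u v
variable {R : Type u} [Ring R]

/-- Given a torsion, almost torsionfree module `S`, a surjection `h : T ↠ S` with
`T ∈ 𝒯` and `ker h ∈ 𝒯`, and a short exact sequence `0 → K → M → S → 0` with
`M ∈ 𝒯`, the pullback `P` of `f : M → S` and `h : T → S` sits in an exact sequence
`0 → K → P → T → 0`; and if the second projection `P → T` admits a section, then
`K ∈ 𝒯`. -/
theorem stmt_16 (𝒯 ℱ : Set (ModuleCat.{v} R)) (htp : IsTorsionPair R 𝒯 ℱ)
    (S : ModuleCat.{v} R) (hS : IsTAlmostTorsionFree 𝒯 ℱ S)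
    (T M K : ModuleCat.{v} R) (hT : T ∈ 𝒯) (hM : M ∈ 𝒯)
    (h : ↑T →ₗ[R] ↑S) (hh : Function.Surjective h)
    (hkerh : ModuleCat.of R (LinearMap.ker h) ∈ 𝒯)
    (f : ↑M →ₗ[R] ↑S) (hf : Function.Surjective f)
    (iK : ↑K →ₗ[R] ↑M) (hiK : Function.Injective iK)
    (hexact : LinearMap.range iK = LinearMap.ker f) :
    let P : Submodule R (↑M × ↑T) :=
      LinearMap.ker (f ∘ₗ LinearMap.fst R ↑M ↑T - h ∘ₗ LinearMap.snd R ↑M ↑T)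
    let π₂ : ↥P →ₗ[R] ↑T := (LinearMap.snd R ↑M ↑T) ∘ₗ P.subtype
    Function.Surjective π₂ ∧
    (∀ x : ↥P, π₂ x = 0 ↔ ∃ c : ↑K, ((x : ↑M × ↑T) = (iK c, 0))) ∧
    ((∃ s : ↑T →ₗ[R] ↥P, π₂ ∘ₗ s = LinearMap.id) → K ∈ 𝒯) := by
  intro P π₂
  have memP : ∀ x : ↑M × ↑T, x ∈ P ↔ f x.1 = h x.2 := by
    intro x
    simp only [P, LinearMap.mem_ker, LinearMap.sub_apply, LinearMap.comp_apply,
      LinearMap.fst_apply, LinearMap.snd_apply, sub_eq_zero]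
  have hπ₂app : ∀ x : ↥P, π₂ x = (x : ↑M × ↑T).2 := fun x => rfl
  -- π₁ : P → M
  set π₁ : ↥P →ₗ[R] ↑M := (LinearMap.fst R ↑M ↑T) ∘ₗ P.subtype with hπ₁def
  have hπ₁app : ∀ x : ↥P, π₁ x = (x : ↑M × ↑T).1 := fun x => rfl
  have hπ₁surj : Function.Surjective π₁ := by
    intro m
    obtain ⟨t, ht⟩ := hh (f m)
    exact ⟨⟨(m, t), (memP _).mpr ht.symm⟩, rfl⟩
  -- P is torsion
  have hP : ModuleCat.of R ↥P ∈ 𝒯 := by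
    apply htp.2.1
    intro F hF g
    -- the inclusion of ker h into P
    have hjmem : ∀ t : ↥(LinearMap.ker h),
        ((LinearMap.inr R ↑M ↑T) ((LinearMap.ker h).subtype t)) ∈ P := by
      intro t
      rw [memP]
      simp [t.2]
    set j : ↥(LinearMap.ker h) →ₗ[R] ↥P :=
      LinearMap.codRestrict P ((LinearMap.inr R ↑M ↑T) ∘ₗ (LinearMap.ker h).subtype)
        hjmem with hjdef
    have hgj : g ∘ₗ j = 0 :=
      htp.1 (ModuleCat.of R (LinearMap.ker h)) hkerh F hF (g ∘ₗ j)
    have hker0 : LinearMap.ker π₁ ≤ LinearMap.ker g := by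
      intro x hx
      have hx1 : (x : ↑M × ↑T).1 = 0 := hx
      have hx2 : h (x : ↑M × ↑T).2 = 0 := by
        have := (memP _).mp x.2
        rw [hx1, map_zero] at this
        exact this.symm
      have hxj : x = j ⟨(x : ↑M × ↑T).2, hx2⟩ := by
        apply Subtype.ext
        simp [hjdef, LinearMap.codRestrict]
        exact Prod.ext hx1 rfl
      have h4 : g (j ⟨(x : ↑M × ↑T).2, hx2⟩) = 0 := by
        have := congrFun (congrArg DFunLike.coe hgj) ⟨(x : ↑M × ↑T).2, hx2⟩
        simpa using this
      exact (congrArg g hxj).trans h4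
    set e := π₁.quotKerEquivOfSurjective hπ₁surj with hedef
    have hg' : ((LinearMap.ker π₁).liftQ g hker0) ∘ₗ (e.symm : ↑M →ₗ[R] _) = 0 :=
      htp.1 M hM F hF _
    ext x
    have h1 : g x = ((LinearMap.ker π₁).liftQ g hker0) (Submodule.Quotient.mk x) := rfl
    have h2 : Submodule.Quotient.mk x = e.symm (e (Submodule.Quotient.mk x)) :=
      (e.symm_apply_apply _).symm
    rw [h1, h2]
    have : (((LinearMap.ker π₁).liftQ g hker0) ∘ₗ (e.symm : ↑M →ₗ[R] _))
        (e (Submodule.Quotient.mk x)) = 0 := by rw [hg']; rfl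
    simpa using this
  refine ⟨?_, ?_, ?_⟩
  · -- surjectivity of π₂
    intro t
    obtain ⟨m, hm⟩ := hf (h t)
    exact ⟨⟨(m, t), (memP _).mpr hm⟩, rfl⟩
  · -- kernel description
    intro x
    constructor
    · intro hx
      have hx2 : (x : ↑M × ↑T).2 = 0 := hx
      have hx1 : (x : ↑M × ↑T).1 ∈ LinearMap.ker f := by
        rw [LinearMap.mem_ker, (memP _).mp x.2, hx2, map_zero]
      rw [← hexact] at hx1
      obtain ⟨c, hc⟩ := hx1
      exact ⟨c, Prod.ext hc.symm hx2⟩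
    · rintro ⟨c, hc⟩
      rw [hπ₂app, hc]
  · -- splitting implies K torsion
    rintro ⟨s, hs⟩
    have hst : ∀ t : ↑T, π₂ (s t) = t := fun t => by
      have := congrArg (fun g => g t) hs; simpa using this
    -- the retraction P → K
    set d : ↥P →ₗ[R] ↑M := π₁ - π₁ ∘ₗ s ∘ₗ π₂ with hddef
    have hdmem : ∀ x : ↥P, d x ∈ LinearMap.range iK := by
      intro x
      rw [hexact, LinearMap.mem_ker]
      have hx := (memP _).mp x.2
      have hsx := (memP _).mp (s (π₂ x)).2
      simp only [hddef, LinearMap.sub_apply, LinearMap.comp_apply, map_sub]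
      rw [hπ₁app, hπ₁app, hx, hsx, ← hπ₂app (s (π₂ x)), hst, hπ₂app, sub_self]
    set eK := LinearEquiv.ofInjective iK hiK with heKdef
    set r : ↥P →ₗ[R] ↑K :=
      (eK.symm : ↥(LinearMap.range iK) →ₗ[R] ↑K) ∘ₗ
        (LinearMap.codRestrict (LinearMap.range iK) d hdmem) with hrdef
    have hrsurj : Function.Surjective r := by
      intro c
      have hc1 : f (iK c) = 0 := by
        have : iK c ∈ LinearMap.ker f := hexact ▸ LinearMap.mem_range_self iK c
        exact this
      have hmem : ((iK c, 0) : ↑M × ↑T) ∈ P := by rw [memP]; simpa using hc1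
      refine ⟨⟨(iK c, 0), hmem⟩, ?_⟩
      have hπ₂0 : π₂ (⟨(iK c, 0), hmem⟩ : ↥P) = 0 := rfl
      have hd : d (⟨(iK c, 0), hmem⟩ : ↥P) = iK c := by
        simp only [hddef, LinearMap.sub_apply, LinearMap.comp_apply, hπ₂0, map_zero]
        rw [hπ₁app]
        simp
      rw [hrdef]
      simp only [LinearMap.comp_apply]
      rw [LinearEquiv.coe_coe, LinearEquiv.symm_apply_eq]
      apply Subtype.ext
      simp only [LinearMap.codRestrict_apply, hd, heKdef]
      rw [LinearEquiv.ofInjective_apply]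
    apply htp.2.1
    intro F hF g
    have hgr : g ∘ₗ r = 0 := htp.1 (ModuleCat.of R ↥P) hP F hF (g ∘ₗ r)
    ext c
    obtain ⟨x, hx⟩ := hrsurj c
    have : g c = (g ∘ₗ r) x := by rw [← hx]; rfl
    rw [this, hgr]
    rfl
end

section
/- Let R be a left noetherian ring, 𝐭 a torsion class in R-mod (closed under quotients and extensions among finitely generated modules), and let ℱ = 𝐭^{⊥₀} = {M ∈ R-Mod : Hom(U, M) = 0 for all U ∈ 𝐭}. If S is a finitely generated module that is minimal extending for (𝐭, 𝐟 = ℱ ∩ R-mod) — i.e., S ∈ 𝐟, every proper quotient of S is in 𝐭, and every non-split extension 0 → S → P → T → 0 in R-mod with T ∈ 𝐭 has P ∈ 𝐭 — then for every short exact sequence 0 → S → F → M → 0 in R-Mod with F ∈ ℱ, also M ∈ ℱ. -/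
/-!
Let `U ∈ t` and `f : U → M`. Pulling the extension `0 → S → F → M → 0` back along `f` gives an
extension `0 → S → E → U → 0` of finitely generated modules, together with `g : E → F` such that
`f ∘ (E → U) = q ∘ g`. If it splits by `s`, then `f = q ∘ g ∘ s` and `g ∘ s : U → F` vanishes
because `F ∈ ℱ`. Otherwise `E ∈ t` by the minimal extending property, so `g = 0` and `f` vanishes
on the image of the surjection `E → U`.
-/

namespace LinearMap

variable {R : Type*} [Ring R] {S U F M : Type*}
  [AddCommGroup S] [Module R S] [AddCommGroup U] [Module R U]
  [AddCommGroup F] [Module R F] [AddCommGroup M] [Module R M]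

abbrev fiberProduct (f : U →ₗ[R] M) (q : F →ₗ[R] M) : Submodule R (U × F) :=
  eqLocus (f ∘ₗ fst R U F) (q ∘ₗ snd R U F)

variable (f : U →ₗ[R] M) (q : F →ₗ[R] M)

abbrev fiberProductFst : fiberProduct f q →ₗ[R] U := fst R U F ∘ₗ (fiberProduct f q).subtype

abbrev fiberProductSnd : fiberProduct f q →ₗ[R] F := snd R U F ∘ₗ (fiberProduct f q).subtype

theorem comp_fiberProductFst : f ∘ₗ fiberProductFst f q = q ∘ₗ fiberProductSnd f q :=
  ext fun p => p.2

theorem fiberProductFst_surjective (hq : Function.Surjective q) :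
    Function.Surjective (fiberProductFst f q) := fun u =>
  let ⟨x, hx⟩ := hq (f u)
  ⟨⟨(u, x), hx.symm⟩, rfl⟩

def fiberProductInr (i : S →ₗ[R] F) (hiq : q ∘ₗ i = 0) : S →ₗ[R] fiberProduct f q :=
  codRestrict _ (inr R U F ∘ₗ i) fun s => by
    simp [show q (i s) = 0 from congr($hiq s)]

theorem fiberProductInr_injective {i : S →ₗ[R] F} (hiq : q ∘ₗ i = 0)
    (hi : Function.Injective i) : Function.Injective (fiberProductInr f q i hiq) :=
  fun _ _ h => hi congr(($h : U × F).2)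

theorem exact_fiberProductInr_fiberProductFst {i : S →ₗ[R] F} (hiq : Function.Exact i q) :
    Function.Exact (fiberProductInr f q i hiq.linearMap_comp_eq_zero) (fiberProductFst f q) := by
  rintro ⟨⟨u, x⟩, hux⟩
  constructor
  · rintro (rfl : u = 0)
    obtain ⟨s, rfl⟩ := (hiq x).1 (by simpa using hux.symm)
    exact ⟨s, rfl⟩
  · rintro ⟨s, hs⟩
    exact congr(($hs : U × F).1).symm

theorem eq_zero_of_fiberProductFst_comp_eq_id {s : U →ₗ[R] fiberProduct f q}
    (hs : fiberProductFst f q ∘ₗ s = id) (hgs : fiberProductSnd f q ∘ₗ s = 0) : f = 0 := by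
  calc f = f ∘ₗ fiberProductFst f q ∘ₗ s := by rw [hs, comp_id]
    _ = q ∘ₗ fiberProductSnd f q ∘ₗ s := by rw [← comp_assoc, comp_fiberProductFst, comp_assoc]
    _ = 0 := by rw [hgs, comp_zero]

theorem eq_zero_of_fiberProductSnd_eq_zero (hq : Function.Surjective q)
    (hg : fiberProductSnd f q = 0) : f = 0 := by
  have hfp : f ∘ₗ fiberProductFst f q = 0 := by rw [comp_fiberProductFst, hg, comp_zero]
  ext u
  obtain ⟨p, rfl⟩ := fiberProductFst_surjective f q hq u
  exact congr($hfp p)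

end LinearMap

open LinearMap in
theorem stmt_18_general (R : Type u) [Ring R]
    (t : Set (ModuleCat.{v} R))
    (hfin : ∀ U ∈ t, Module.Finite R ↑U)
    (ℱ : Set (ModuleCat.{v} R))
    (hℱ : ℱ = {M : ModuleCat.{v} R | ∀ U ∈ t, ∀ f : ↑U →ₗ[R] ↑M, f = 0})
    (S : ModuleCat.{v} R) (hSfin : Module.Finite R ↑S)
    (hSext : ∀ T ∈ t, ∀ (P : ModuleCat.{v} R), Module.Finite R ↑P →
      ∀ (i : ↑S →ₗ[R] ↑P) (p : ↑P →ₗ[R] ↑T),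
        Function.Injective i → Function.Surjective p →
        LinearMap.range i = LinearMap.ker p →
        (¬ ∃ s : ↑T →ₗ[R] ↑P, p ∘ₗ s = LinearMap.id) → P ∈ t) :
    ∀ F ∈ ℱ, ∀ (M : ModuleCat.{v} R), ∀ (i : ↑S →ₗ[R] ↑F) (q : ↑F →ₗ[R] ↑M),
      Function.Injective i → Function.Surjective q →
      LinearMap.range i = LinearMap.ker q → M ∈ ℱ := by
  subst hℱ
  intro F hF M i q hi hq hiq U hU f
  have hexact : Function.Exact i q := exact_iff.2 hiq.symm
  have hUfin := hfin U hU
  have hE := exact_fiberProductInr_fiberProductFst f q hexact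
  have hEfin : Module.Finite R (fiberProduct f q) :=
    .of_exact hE (fiberProductFst_surjective f q hq)
  by_cases hsplit : ∃ s : U →ₗ[R] fiberProduct f q, fiberProductFst f q ∘ₗ s = LinearMap.id
  · obtain ⟨s, hs⟩ := hsplit
    exact eq_zero_of_fiberProductFst_comp_eq_id f q hs (hF U hU _)
  · have hEt := hSext U hU (.of R (fiberProduct f q)) hEfin _ _
      (fiberProductInr_injective f q _ hi) (fiberProductFst_surjective f q hq)
      (exact_iff.1 hE).symm hsplit
    exact eq_zero_of_fiberProductSnd_eq_zero f q hq (hF _ hEt _)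

/-- Let `R` be a left noetherian ring and `t` a torsion class in `R`-mod: a class of
finitely generated modules closed under quotients and extensions.  Let
`ℱ = t^{⊥₀}` be the corresponding definable torsionfree class in `R`-Mod.  If `S` is
a finitely generated minimal extending module for `(t, 𝐟)` — `S` is torsionfree,
every proper quotient of `S` lies in `t`, and every non-split extension
`0 → S → P → T → 0` of finitely generated modules with `T ∈ t` has `P ∈ t` — then
for every short exact sequence `0 → S → F → M → 0` in `R`-Mod with `F ∈ ℱ`, also
`M ∈ ℱ`. -/
theorem stmt_18 (R : Type u) [Ring R] [IsNoetherianRing R]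
    (t : Set (ModuleCat.{v} R))
    (hfin : ∀ U ∈ t, Module.Finite R ↑U)
    (hquot : ∀ U ∈ t, ∀ N : Submodule R ↑U, ModuleCat.of R (↑U ⧸ N) ∈ t)
    (hext : ∀ (A B : ModuleCat.{v} R), A ∈ t → B ∈ t →
      ∀ (E : ModuleCat.{v} R), Module.Finite R ↑E →
      ∀ (i : ↑A →ₗ[R] ↑E) (p : ↑E →ₗ[R] ↑B),
        Function.Injective i → Function.Surjective p →
        LinearMap.range i = LinearMap.ker p → E ∈ t)
    (ℱ : Set (ModuleCat.{v} R))
    (hℱ : ℱ = {M : ModuleCat.{v} R | ∀ U ∈ t, ∀ f : ↑U →ₗ[R] ↑M, f = 0})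
    (S : ModuleCat.{v} R) (hSfin : Module.Finite R ↑S) (hS0 : Nontrivial ↑S)
    (hSf : S ∈ ℱ)
    (hSquot : ∀ N : Submodule R ↑S, N ≠ ⊥ → ModuleCat.of R (↑S ⧸ N) ∈ t)
    (hSext : ∀ T ∈ t, ∀ (P : ModuleCat.{v} R), Module.Finite R ↑P →
      ∀ (i : ↑S →ₗ[R] ↑P) (p : ↑P →ₗ[R] ↑T),
        Function.Injective i → Function.Surjective p →
        LinearMap.range i = LinearMap.ker p →
        (¬ ∃ s : ↑T →ₗ[R] ↑P, p ∘ₗ s = LinearMap.id) → P ∈ t) :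
    ∀ F ∈ ℱ, ∀ (M : ModuleCat.{v} R), ∀ (i : ↑S →ₗ[R] ↑F) (q : ↑F →ₗ[R] ↑M),
      Function.Injective i → Function.Surjective q →
      LinearMap.range i = LinearMap.ker q → M ∈ ℱ :=
  stmt_18_general R t hfin ℱ hℱ S hSfin hSext
end
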